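/- arXiv:2104.06870 — 2 statements merged into one kernel-verified Lean document; each statement's English description precedes it below -/
import Mathlib

section
/- Let n ≥ 1 and let c > 0 be the first positive critical point of the spherical Bessel function j_n, i.e., suppose the derivative j_n′(c) = 0 and j_n′(x) ≠ 0 for all x ∈ (0, c). Then j_n is strictly increasing on the interval (0, c]; in particular, for any k > 0 and 0 < ρ < τ with kτ ≤ c one has j_n(kρ) < j_n(kτ). -/
open Real Filter Set

noncomputable section

/-- The spherical Bessel function of the first kind `jₙ`, defined by
`j₀(x) = sin x / x`, `j₁(x) = sin x / x² - cos x / x`, and the recurrence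
`j_{n+1}(x) = ((2n+1)/x) jₙ(x) - j_{n-1}(x)` for `n ≥ 1`. -/
noncomputable def sbj : ℕ → ℝ → ℝ
  | 0 => fun x => Real.sin x / x
  | 1 => fun x => Real.sin x / x ^ 2 - Real.cos x / x
  | n + 2 => fun x => ((2 * (n + 1 : ℝ) + 1) / x) * sbj (n + 1) x - sbj n x

/-- `r` (on indices `s ≥ 1`) is the increasing enumeration of the positive zeros of `jₙ`. -/
def IsZeroEnum (n : ℕ) (r : ℕ → ℝ) : Prop :=
  StrictMonoOn r (Set.Ici 1) ∧ 0 < r 1 ∧ (∀ s, 1 ≤ s → sbj n (r s) = 0) ∧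
    ∀ x : ℝ, 0 < x → sbj n x = 0 → ∃ s, 1 ≤ s ∧ x = r s

/-- The determinant function whose positive zeros are the TE transmission eigenvalues
of the ball of radius `R` with constant permittivity `ε₀²`. -/
noncomputable def fTE (R ε₀ : ℝ) (n : ℕ) (k : ℝ) : ℝ :=
  k * (ε₀ * sbj n (k * R) * sbj (n + 1) (k * ε₀ * R)
        - sbj (n + 1) (k * R) * sbj n (k * ε₀ * R))

/-- The determinant function whose positive zeros are the TM transmission eigenvalues
of the ball of radius `R` with constant permittivity `ε₀²`. -/
noncomputable def fTM (R ε₀ : ℝ) (n : ℕ) (k : ℝ) : ℝ :=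
  ((1 - ε₀ ^ 2) * (n + 1 : ℝ) / R) * sbj n (k * R) * sbj n (k * ε₀ * R)
    + k * ε₀ * (ε₀ * sbj n (k * ε₀ * R) * sbj (n + 1) (k * R)
        - sbj n (k * R) * sbj (n + 1) (k * ε₀ * R))


open Nat

noncomputable def sbc (n m : ℕ) : ℝ :=
  (-1)^m * 2^n * (n+m)! / ((m)! * (2*(n+m)+1)!)

noncomputable def sbf (n : ℕ) (x : ℝ) : ℝ := ∑' m : ℕ, sbc n m * x^(2*m)

lemma two_pow_mul_factorial_le (k : ℕ) : 2^k * k ! ≤ (2*k+1)! := by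
  induction k with
  | zero => simp
  | succ k ih =>
    have h : 2*(k+1)+1 = (2*k+1)+1+1 := by omega
    rw [h, Nat.factorial_succ, Nat.factorial_succ, pow_succ, Nat.factorial_succ]
    calc 2^k * 2 * ((k+1) * k !) = (2*(k+1)) * (2^k * k !) := by ring
    _ ≤ (2*(k+1)) * (2*k+1)! := Nat.mul_le_mul_left _ ih
    _ ≤ ((2*k+1)+1+1) * (((2*k+1)+1) * (2*k+1)!) := by
        have : 2*(k+1) ≤ ((2*k+1)+1+1) * ((2*k+1)+1) := by nlinarith
        calc (2*(k+1)) * (2*k+1)! ≤ (((2*k+1)+1+1) * ((2*k+1)+1)) * (2*k+1)! :=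
              Nat.mul_le_mul_right _ this
        _ = _ := by ring

lemma abs_sbc_le (n m : ℕ) : |sbc n m| ≤ 1 / m ! := by
  have h1 : (2:ℕ)^n * (n+m)! ≤ (2*(n+m)+1)! := by
    calc (2:ℕ)^n * (n+m)! ≤ 2^(n+m) * (n+m)! :=
          Nat.mul_le_mul_right _ (Nat.pow_le_pow_right (by norm_num) (Nat.le_add_right _ _))
    _ ≤ _ := two_pow_mul_factorial_le _
  have hm : (0:ℝ) < (m ! : ℝ) := by exact_mod_cast Nat.factorial_pos m
  have hf : (0:ℝ) < ((2*(n+m)+1)! : ℝ) := by exact_mod_cast Nat.factorial_pos _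
  have habs : |sbc n m| = 2^n * (n+m)! / ((m)! * (2*(n+m)+1)!) := by
    unfold sbc
    rw [abs_div, abs_mul, abs_mul, abs_pow, abs_neg, abs_one, one_pow, one_mul]
    rw [abs_of_pos (by positivity : (0:ℝ) < (2:ℝ)^n)]
    rw [Nat.abs_cast, abs_of_pos (by positivity : (0:ℝ) < (m !:ℝ) * ((2*(n+m)+1)! : ℝ))]
  rw [habs, div_le_div_iff₀ (by positivity) hm, one_mul]
  calc (2:ℝ)^n * (n+m)! * (m)! ≤ ((2*(n+m)+1)! : ℝ) * (m)! := by
        have : ((2:ℕ)^n * (n+m)! : ℝ) ≤ ((2*(n+m)+1)! : ℝ) := by exact_mod_cast h1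
        push_cast at this ⊢
        nlinarith [hm.le]
  _ = (m)! * ((2*(n+m)+1)! : ℝ) := by ring

lemma abs_term_le (n m : ℕ) (x : ℝ) : |sbc n m * x^(2*m)| ≤ (x^2)^m / m ! := by
  rw [abs_mul]
  have h2 : (0:ℝ) ≤ (x^2)^m := by positivity
  have := abs_sbc_le n m
  have h3 : |sbc n m| * (x^2)^m ≤ (1/m !) * (x^2)^m :=
    mul_le_mul_of_nonneg_right this h2
  calc |sbc n m| * |x^(2*m)| = |sbc n m| * (x^2)^m := by
        rw [abs_pow, pow_mul, sq_abs]
  _ ≤ (1/m !) * (x^2)^m := h3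
  _ = (x^2)^m / m ! := by ring

lemma summable_abs_sbf (n : ℕ) (x : ℝ) : Summable (fun m => |sbc n m * x^(2*m)|) :=
  Summable.of_nonneg_of_le (fun m => abs_nonneg _) (fun m => abs_term_le n m x)
    (Real.summable_pow_div_factorial (x^2))

lemma summable_sbf (n : ℕ) (x : ℝ) : Summable (fun m => sbc n m * x^(2*m)) :=
  (summable_abs_sbf n x).of_abs

lemma sbc_zero_eq (n : ℕ) : (2*(n:ℝ)+3) * sbc (n+1) 0 - sbc n 0 = 0 := by
  unfold sbc
  rw [show n+1+0 = n+0+1 from by omega, show 2*(n+0+1)+1 = 2*(n+0)+1+1+1 from by omega]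
  simp only [Nat.factorial_succ]
  have h0 : ((2*(n+0)+1)! : ℝ) ≠ 0 := by exact_mod_cast Nat.factorial_ne_zero _
  have h1 : ((0:ℕ)! : ℝ) ≠ 0 := by exact_mod_cast Nat.factorial_ne_zero _
  field_simp
  push_cast
  ring

lemma sbc_succ_eq (n m : ℕ) :
    (2*(n:ℝ)+3) * sbc (n+1) (m+1) - sbc n (m+1) = sbc (n+2) m := by
  unfold sbc
  rw [show n+1+(m+1) = n+m+1+1 from by omega, show n+(m+1) = n+m+1 from by omega,
      show n+2+m = n+m+1+1 from by omega,
      show 2*(n+m+1+1)+1 = 2*(n+m)+1+1+1+1+1 from by omega,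
      show 2*(n+m+1)+1 = 2*(n+m)+1+1+1 from by omega]
  simp only [Nat.factorial_succ]
  have h0 : ((2*(n+m)+1)! : ℝ) ≠ 0 := by exact_mod_cast Nat.factorial_ne_zero _
  have h1 : ((m)! : ℝ) ≠ 0 := by exact_mod_cast Nat.factorial_ne_zero _
  have h2 : (((n+m))! : ℝ) ≠ 0 := by exact_mod_cast Nat.factorial_ne_zero _
  field_simp
  push_cast
  ring

lemma sbc_zero_pos (n : ℕ) : 0 < sbc n 0 := by
  unfold sbc
  positivity

lemma two_pow_le_factorial_succ (m : ℕ) : 2^m ≤ (m+1)! := by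
  induction m with
  | zero => simp
  | succ m ih =>
    rw [pow_succ, Nat.factorial_succ]
    calc 2^m * 2 ≤ (m+1)! * 2 := Nat.mul_le_mul_right _ ih
    _ ≤ (m+1+1) * (m+1)! := by
        rw [Nat.mul_comm]
        exact Nat.mul_le_mul_right _ (by omega)

lemma sbf_rec (n : ℕ) (x : ℝ) :
    (2*(n:ℝ)+3) * sbf (n+1) x - sbf n x = x^2 * sbf (n+2) x := by
  have s1 := summable_sbf (n+1) x
  have s2 := summable_sbf n x
  have s3 : Summable (fun m => (2*(n:ℝ)+3) * (sbc (n+1) m * x^(2*m))) := s1.mul_left _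
  have key : (2*(n:ℝ)+3) * sbf (n+1) x - sbf n x
      = ∑' m : ℕ, ((2*(n:ℝ)+3) * (sbc (n+1) m * x^(2*m)) - sbc n m * x^(2*m)) := by
    rw [s3.tsum_sub s2, tsum_mul_left]
    rfl
  rw [key, (s3.sub s2).tsum_eq_zero_add]
  have h0 : (2*(n:ℝ)+3) * (sbc (n+1) 0 * x^(2*0)) - sbc n 0 * x^(2*0) = 0 := by
    have := sbc_zero_eq n
    simp only [Nat.mul_zero, pow_zero, mul_one]
    linarith
  rw [h0, zero_add]
  have h1 : ∀ m : ℕ, (2*(n:ℝ)+3) * (sbc (n+1) (m+1) * x^(2*(m+1))) - sbc n (m+1) * x^(2*(m+1))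
      = x^2 * (sbc (n+2) m * x^(2*m)) := by
    intro m
    have := sbc_succ_eq n m
    calc (2*(n:ℝ)+3) * (sbc (n+1) (m+1) * x^(2*(m+1))) - sbc n (m+1) * x^(2*(m+1))
        = ((2*(n:ℝ)+3) * sbc (n+1) (m+1) - sbc n (m+1)) * x^(2*(m+1)) := by ring
    _ = sbc (n+2) m * x^(2*(m+1)) := by rw [this]
    _ = x^2 * (sbc (n+2) m * x^(2*m)) := by ring
  rw [tsum_congr h1, tsum_mul_left]
  rfl

lemma sbj0_eq (x : ℝ) (hx : x ≠ 0) : Real.sin x / x = x^0 * sbf 0 x := by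
  have h : Real.sin x = x * sbf 0 x := by
    rw [Real.sin_eq_tsum]
    unfold sbf
    rw [← tsum_mul_left]
    apply tsum_congr
    intro m
    unfold sbc
    have h1 : ((2*m+1)! : ℝ) ≠ 0 := by exact_mod_cast Nat.factorial_ne_zero _
    have h2 : ((m)! : ℝ) ≠ 0 := by exact_mod_cast Nat.factorial_ne_zero _
    simp only [Nat.zero_add, pow_zero]
    field_simp
    ring
  rw [pow_zero, one_mul, h, mul_div_cancel_left₀ _ hx]

lemma sbj1_eq (x : ℝ) (hx : x ≠ 0) :
    Real.sin x / x^2 - Real.cos x / x = x^1 * sbf 1 x := by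
  have h : Real.sin x - x * Real.cos x = x^3 * sbf 1 x := by
    have hs := Real.hasSum_sin x
    have hc := (Real.hasSum_cos x).mul_left x
    have hd := hs.sub hc
    rw [← hd.tsum_eq, hd.summable.tsum_eq_zero_add]
    have h0 : (-1:ℝ)^0 * x^(2*0+1)/(2*0+1)! - x * ((-1)^0 * x^(2*0)/(2*0)!) = 0 := by
      norm_num
    rw [h0, zero_add]
    unfold sbf
    rw [← tsum_mul_left]
    apply tsum_congr
    intro m
    unfold sbc
    rw [show (1:ℕ)+m = m+1 from by omega, show 2*(m+1)+1 = 2*m+1+1+1 from by omega,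
        show 2*(m+1) = 2*m+1+1 from by omega]
    simp only [Nat.factorial_succ]
    have h1 : ((2*m+1)! : ℝ) ≠ 0 := by exact_mod_cast Nat.factorial_ne_zero _
    have h2 : ((m)! : ℝ) ≠ 0 := by exact_mod_cast Nat.factorial_ne_zero _
    field_simp
    push_cast
    ring
  have hx2 : x^2 ≠ 0 := pow_ne_zero _ hx
  field_simp
  linear_combination h

attribute [irreducible] sbc

lemma sbj_eq_sbf (n : ℕ) (x : ℝ) (hx : x ≠ 0) : sbj n x = x^n * sbf n x := by
  induction n using Nat.strong_induction_on with
  | _ n ih =>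
    match n with
    | 0 => exact sbj0_eq x hx
    | 1 => exact sbj1_eq x hx
    | (k+2) =>
      have i1 : sbj (k+1) x = x^(k+1) * sbf (k+1) x := ih (k+1) (by omega)
      have i0 : sbj k x = x^k * sbf k x := ih k (by omega)
      show ((2 * (k + 1 : ℝ) + 1) / x) * sbj (k + 1) x - sbj k x = _
      rw [i1, i0]
      have h : ((2 * (k + 1 : ℝ) + 1) / x) * (x^(k+1) * sbf (k+1) x)
          = x^k * ((2*(k:ℝ)+3) * sbf (k+1) x) := by
        rw [pow_succ]
        field_simp
        ring
      rw [h]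
      have : x^k * ((2*(k:ℝ)+3) * sbf (k+1) x) - x^k * sbf k x
          = x^k * ((2*(k:ℝ)+3) * sbf (k+1) x - sbf k x) := by ring
      rw [this, sbf_rec k x]
      ring

lemma sbf_near (n : ℕ) {x : ℝ} (h0 : 0 < x) (h1 : x ≤ 1) : |sbf n x - sbc n 0| ≤ 2 * x^2 := by
  have hs := summable_sbf n x
  have heq : sbf n x = sbc n 0 * x^(2*0) + ∑' m : ℕ, sbc n (m+1) * x^(2*(m+1)) :=
    hs.tsum_eq_zero_add
  have hx0 : sbc n 0 * x^(2*0) = sbc n 0 := by norm_num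
  have hdiff : sbf n x - sbc n 0 = ∑' m : ℕ, sbc n (m+1) * x^(2*(m+1)) := by
    rw [heq, hx0]; ring
  rw [hdiff]
  have hsum_abs : Summable (fun m : ℕ => |sbc n (m+1) * x^(2*(m+1))|) :=
    (summable_nat_add_iff 1).2 (summable_abs_sbf n x)
  have hgeo : Summable (fun m : ℕ => x^2 * (1/2:ℝ)^m) := (summable_geometric_two).mul_left _
  have hterm : ∀ m : ℕ, |sbc n (m+1) * x^(2*(m+1))| ≤ x^2 * (1/2:ℝ)^m := by
    intro m
    rw [abs_mul]
    have hb : |sbc n (m+1)| ≤ (1/2:ℝ)^m := by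
      calc |sbc n (m+1)| ≤ 1 / (m+1)! := abs_sbc_le n (m+1)
      _ ≤ 1 / 2^m := by
          apply div_le_div_of_nonneg_left (by norm_num) (by positivity)
          exact_mod_cast two_pow_le_factorial_succ m
      _ = (1/2:ℝ)^m := by rw [div_pow, one_pow]
    have hxx : x^2 ≤ 1 := by nlinarith
    have hp : |x^(2*(m+1))| ≤ x^2 := by
      rw [abs_of_nonneg (by positivity)]
      calc x^(2*(m+1)) = x^2 * (x^2)^m := by ring
      _ ≤ x^2 * 1 := mul_le_mul_of_nonneg_left (pow_le_one₀ (by positivity) hxx) (by positivity)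
      _ = x^2 := by ring
    calc |sbc n (m+1)| * |x^(2*(m+1))| ≤ (1/2:ℝ)^m * x^2 :=
        mul_le_mul hb hp (abs_nonneg _) (by positivity)
    _ = x^2 * (1/2:ℝ)^m := by ring
  have h1 : ‖∑' m : ℕ, sbc n (m+1) * x^(2*(m+1))‖ ≤ ∑' m : ℕ, ‖sbc n (m+1) * x^(2*(m+1))‖ :=
    norm_tsum_le_tsum_norm (by simpa only [Real.norm_eq_abs] using hsum_abs)
  rw [Real.norm_eq_abs] at h1
  simp only [Real.norm_eq_abs] at h1
  calc |∑' m : ℕ, sbc n (m+1) * x^(2*(m+1))| ≤ ∑' m : ℕ, |sbc n (m+1) * x^(2*(m+1))| := h1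
  _ ≤ ∑' m : ℕ, x^2 * (1/2:ℝ)^m := hsum_abs.tsum_le_tsum hterm hgeo
  _ = x^2 * ∑' m : ℕ, (1/2:ℝ)^m := tsum_mul_left
  _ = 2 * x^2 := by rw [tsum_geometric_two]; ring

lemma sbj_pos_near (n : ℕ) : ∃ δ > (0:ℝ), ∀ x : ℝ, 0 < x → x ≤ δ → 0 < sbj n x := by
  have hC := sbc_zero_pos n
  refine ⟨min 1 (Real.sqrt (sbc n 0 / 4)), lt_min one_pos (Real.sqrt_pos.2 (by linarith)), ?_⟩
  intro x hx hxle
  have hx1 : x ≤ 1 := hxle.trans (min_le_left _ _)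
  have hxs : x ≤ Real.sqrt (sbc n 0 / 4) := hxle.trans (min_le_right _ _)
  have hx2 : x^2 ≤ sbc n 0 / 4 := by
    have := Real.sq_sqrt (by linarith : (0:ℝ) ≤ sbc n 0 / 4)
    nlinarith [Real.sqrt_nonneg (sbc n 0 / 4)]
  have hnear := sbf_near n hx hx1
  have hfpos : 0 < sbf n x := by
    have := abs_le.1 hnear
    nlinarith [this.1]
  rw [sbj_eq_sbf n x hx.ne']
  positivity

lemma sbj_tendsto_zero (n : ℕ) (hn : 1 ≤ n) :
    Tendsto (sbj n) (nhdsWithin 0 (Set.Ioi 0)) (nhds 0) := by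
  have hC := sbc_zero_pos n
  apply squeeze_zero_norm' (a := fun x => (sbc n 0 + 2) * x)
  · filter_upwards [Ioo_mem_nhdsGT_of_mem (show (0:ℝ) ∈ Ico 0 1 by norm_num)] with x hx
    have hx0 : (0:ℝ) < x := hx.1
    have hx1 : x ≤ 1 := hx.2.le
    have hnear := sbf_near n hx0 hx1
    have habs : |sbf n x| ≤ sbc n 0 + 2 := by
      have := abs_le.1 hnear
      have h2 : 2 * x^2 ≤ 2 := by nlinarith
      rw [abs_le]
      constructor <;> nlinarith [this.1, this.2]
    rw [Real.norm_eq_abs, sbj_eq_sbf n x hx0.ne', abs_mul, abs_pow,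
        abs_of_pos hx0]
    have hpow : x^n ≤ x := by
      calc x^n ≤ x^1 := pow_le_pow_of_le_one hx0.le hx1 hn
      _ = x := pow_one x
    calc x^n * |sbf n x| ≤ x * (sbc n 0 + 2) :=
        mul_le_mul hpow habs (abs_nonneg _) hx0.le
    _ = (sbc n 0 + 2) * x := by ring
  · have : Tendsto (fun x : ℝ => (sbc n 0 + 2) * x) (nhds 0) (nhds ((sbc n 0 + 2) * 0)) :=
      (continuous_const.mul continuous_id).tendsto 0
    rw [mul_zero] at this
    exact this.mono_left nhdsWithin_le_nhds

lemma sbj_contDiffOn : ∀ n : ℕ, ContDiffOn ℝ (⊤ : ℕ∞) (sbj n) {(0:ℝ)}ᶜ := by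
  have key : ∀ n : ℕ, ContDiffOn ℝ (⊤ : ℕ∞) (sbj n) {(0:ℝ)}ᶜ ∧ ContDiffOn ℝ (⊤ : ℕ∞) (sbj (n+1)) {(0:ℝ)}ᶜ := by
    intro n
    induction n with
    | zero =>
      constructor
      · show ContDiffOn ℝ (⊤ : ℕ∞) (fun x => Real.sin x / x) {(0:ℝ)}ᶜ
        exact Real.contDiff_sin.contDiffOn.div contDiffOn_id (fun x hx => hx)
      · show ContDiffOn ℝ (⊤ : ℕ∞) (fun x => Real.sin x / x^2 - Real.cos x / x) {(0:ℝ)}ᶜ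
        apply ContDiffOn.sub
        · exact Real.contDiff_sin.contDiffOn.div (contDiffOn_id.pow 2)
            (fun x hx => pow_ne_zero 2 hx)
        · exact Real.contDiff_cos.contDiffOn.div contDiffOn_id (fun x hx => hx)
    | succ k ih =>
      refine ⟨ih.2, ?_⟩
      show ContDiffOn ℝ (⊤ : ℕ∞) (fun x => ((2 * (k + 1 : ℝ) + 1) / x) * sbj (k + 1) x - sbj k x) {(0:ℝ)}ᶜ
      apply ContDiffOn.sub
      · exact (contDiffOn_const.div contDiffOn_id (fun x hx => hx)).mul ih.2
      · exact ih.1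
  exact fun n => (key n).1

/-- `jₙ` (`n ≥ 1`) is strictly increasing up to its first positive critical
point `c`; in particular `jₙ(kρ) < jₙ(kτ)` whenever `0 < ρ < τ` and `kτ ≤ c`. -/
theorem sbj_strictMonoOn_before_first_critical_point
    (n : ℕ) (hn : 1 ≤ n) (c : ℝ) (hc : 0 < c)
    (hcrit : deriv (sbj n) c = 0)
    (hfirst : ∀ x ∈ Set.Ioo (0 : ℝ) c, deriv (sbj n) x ≠ 0) :
    StrictMonoOn (sbj n) (Set.Ioc (0 : ℝ) c)
    ∧ ∀ k ρ τ : ℝ, 0 < k → 0 < ρ → ρ < τ → k * τ ≤ c →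
        sbj n (k * ρ) < sbj n (k * τ) := by
  have hsub : Set.Ioc (0:ℝ) c ⊆ {(0:ℝ)}ᶜ := by
    intro x hx; simp only [Set.mem_compl_iff, Set.mem_singleton_iff]; exact ne_of_gt hx.1
  have hsub' : Set.Ioo (0:ℝ) c ⊆ {(0:ℝ)}ᶜ := fun x hx => hsub ⟨hx.1, hx.2.le⟩
  have hcont : ContinuousOn (sbj n) (Set.Ioc (0:ℝ) c) :=
    ((sbj_contDiffOn n).continuousOn).mono hsub
  have hdercont : ContinuousOn (deriv (sbj n)) {(0:ℝ)}ᶜ :=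
    (sbj_contDiffOn n).continuousOn_deriv_of_isOpen isOpen_compl_singleton (mod_cast le_top)
  -- sign dichotomy via IVT
  have hsign : (∀ x ∈ Set.Ioo (0:ℝ) c, 0 < deriv (sbj n) x)
      ∨ (∀ x ∈ Set.Ioo (0:ℝ) c, deriv (sbj n) x < 0) := by
    by_contra h
    push_neg at h
    obtain ⟨⟨a, ha, ha'⟩, ⟨b, hb, hb'⟩⟩ := h
    have hda : deriv (sbj n) a < 0 := lt_of_le_of_ne ha' (hfirst a ha)
    have hdb : 0 < deriv (sbj n) b := lt_of_le_of_ne hb' (Ne.symm (hfirst b hb))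
    have huIcc : Set.uIcc a b ⊆ Set.Ioo (0:ℝ) c := by
      exact Set.OrdConnected.uIcc_subset Set.ordConnected_Ioo ha hb
    have hcd : ContinuousOn (deriv (sbj n)) (Set.uIcc a b) := hdercont.mono (huIcc.trans hsub')
    have h0mem : (0:ℝ) ∈ Set.uIcc (deriv (sbj n) a) (deriv (sbj n) b) := by
      rw [Set.mem_uIcc]; left; exact ⟨hda.le, hdb.le⟩
    obtain ⟨x, hx, hx0⟩ := intermediate_value_uIcc hcd h0mem
    exact hfirst x (huIcc hx) hx0
  rcases hsign with hpos | hneg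
  · have hmono : StrictMonoOn (sbj n) (Set.Ioc (0:ℝ) c) := by
      apply strictMonoOn_of_deriv_pos (convex_Ioc 0 c) hcont
      intro x hx
      rw [interior_Ioc] at hx
      exact hpos x hx
    refine ⟨hmono, fun k ρ τ hk hρ hτ hkτ => ?_⟩
    have h1 : k * ρ < k * τ := by nlinarith
    exact hmono ⟨mul_pos hk hρ, le_trans h1.le hkτ⟩ ⟨mul_pos hk (hρ.trans hτ), hkτ⟩ h1
  · exfalso
    have hanti : StrictAntiOn (sbj n) (Set.Ioc (0:ℝ) c) := by
      apply strictAntiOn_of_deriv_neg (convex_Ioc 0 c) hcont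
      intro x hx
      rw [interior_Ioc] at hx
      exact hneg x hx
    obtain ⟨δ, hδ, hposδ⟩ := sbj_pos_near n
    set x₀ := min δ (c/2) with hx₀def
    have hx₀pos : 0 < x₀ := lt_min hδ (by linarith)
    have hx₀c : x₀ < c := lt_of_le_of_lt (min_le_right _ _) (by linarith)
    have hv : 0 < sbj n x₀ := hposδ x₀ hx₀pos (min_le_left _ _)
    have hev : ∀ᶠ x in nhdsWithin 0 (Set.Ioi 0), sbj n x₀ ≤ sbj n x := by
      filter_upwards [Ioo_mem_nhdsGT_of_mem (show (0:ℝ) ∈ Set.Ico 0 x₀ from ⟨le_refl _, hx₀pos⟩)]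
        with x hx
      exact (hanti ⟨hx.1, (hx.2.trans hx₀c).le⟩ ⟨hx₀pos, hx₀c.le⟩ hx.2).le
    have := ge_of_tendsto (sbj_tendsto_zero n hn) hev
    linarith

end
end

section
/- Let n ∈ ℕ and let k > 0, R > 0 satisfy kR ≤ n + 1/2. Then the function g : [0, R] → ℝ defined by g(ρ) = ρ² j_n(kρ)² for ρ > 0 and g(0) = 0 is convex on [0, R]. -/
open Real Filter Set
open Topology

noncomputable section

lemma sbj_rec (n : ℕ) (x : ℝ) :
    sbj (n + 2) x = ((2 * (n + 1 : ℝ) + 1) / x) * sbj (n + 1) x - sbj n x := rfl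

lemma sbj_zero (x : ℝ) : sbj 0 x = Real.sin x / x := rfl
lemma sbj_one (x : ℝ) : sbj 1 x = Real.sin x / x ^ 2 - Real.cos x / x := rfl

lemma hasDerivAt_sbj : ∀ n : ℕ, ∀ x : ℝ, x ≠ 0 →
    HasDerivAt (sbj n) ((n / x) * sbj n x - sbj (n + 1) x) x := by
  suffices h : ∀ n : ℕ, (∀ x : ℝ, x ≠ 0 →
      HasDerivAt (sbj n) ((n / x) * sbj n x - sbj (n + 1) x) x) ∧
      (∀ x : ℝ, x ≠ 0 →
      HasDerivAt (sbj (n+1)) (((n+1 : ℕ) / x) * sbj (n+1) x - sbj (n + 2) x) x) by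
    exact fun n => (h n).1
  intro n
  induction n with
  | zero =>
    constructor
    · intro x hx
      have h1 := (Real.hasDerivAt_sin x).div (hasDerivAt_id x) hx
      convert h1 using 1
      · rfl
      · rfl
      · rfl
      simp only [id_eq]
      rw [sbj_one, sbj_zero]
      push_cast
      field_simp
      ring
    · intro x hx
      have h1 := ((Real.hasDerivAt_sin x).div (hasDerivAt_pow 2 x) (pow_ne_zero 2 hx)).sub
          ((Real.hasDerivAt_cos x).div (hasDerivAt_id x) hx)
      convert h1 using 1
      · rfl
      · rfl
      · rfl
      simp only [id_eq]
      rw [sbj_rec 0, sbj_one, sbj_zero]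
      push_cast
      field_simp
      ring
  | succ m ih =>
    refine ⟨ih.2, ?_⟩
    intro x hx
    have hm := ih.1 x hx
    have hm1 := ih.2 x hx
    have h1 := (((hasDerivAt_const x (2 * ((m:ℝ) + 1) + 1)).div (hasDerivAt_id x) hx).mul hm1).sub hm
    have h2 : HasDerivAt (sbj (m + 2))
        ((0 * x - (2 * ((m:ℝ) + 1) + 1) * 1) / x ^ 2 * sbj (m + 1) x +
          (2 * ((m:ℝ) + 1) + 1) / x * (((m+1 : ℕ) : ℝ) / x * sbj (m+1) x - sbj (m + 2) x) -
          ((m : ℝ) / x * sbj m x - sbj (m + 1) x)) x := by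
      have he : sbj (m + 2) = fun y => ((2 * ((m:ℝ) + 1) + 1) / y) * sbj (m + 1) y - sbj m y := rfl
      rw [he]; convert h1 using 1 <;> rfl
    convert h2 using 1
    rw [sbj_rec (m+1), sbj_rec m]
    push_cast
    field_simp
    ring


/-- `A n = 1/(2n+1)!!`. -/
noncomputable def sbjA : ℕ → ℝ := fun n => (∏ i ∈ Finset.range n, (2 * (i : ℝ) + 3))⁻¹

lemma sbjA_pos (n : ℕ) : 0 < sbjA n := by
  rw [sbjA, inv_pos]
  exact Finset.prod_pos fun i _ => by positivity

lemma sbjA_le_one (n : ℕ) : sbjA n ≤ 1 := by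
  rw [sbjA, inv_le_one_iff₀]
  right
  induction n with
  | zero => simp
  | succ m ih =>
    rw [Finset.prod_range_succ]
    nlinarith [ih]

lemma sbjA_zero : sbjA 0 = 1 := by simp [sbjA]

lemma sbjA_one : sbjA 1 = 1/3 := by norm_num [sbjA]

lemma sbjA_succ (n : ℕ) : sbjA (n + 1) = sbjA n / (2 * (n : ℝ) + 3) := by
  rw [sbjA, sbjA, Finset.prod_range_succ, mul_inv, div_eq_mul_inv]

lemma hasDerivAt_pow_mul_sbj (m : ℕ) (x : ℝ) (hx : x ≠ 0) :
    HasDerivAt (fun y => y ^ (m + 3) * sbj (m + 2) y) (x ^ (m + 3) * sbj (m + 1) x) x := by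
  have h := (hasDerivAt_pow (m + 3) x).mul (hasDerivAt_sbj (m + 2) x hx)
  convert h using 1
  · rfl
  · rfl
  · rfl
  rw [sbj_rec (m + 1)]
  have h1 : (m + 3 : ℕ) - 1 = m + 2 := rfl
  rw [h1]
  push_cast
  field_simp
  ring

lemma sin_sub_mul_cos_le (x : ℝ) (hx : 0 ≤ x) (hx1 : x ≤ 1) :
    Real.sin x - x * Real.cos x ≤ x ^ 3 / 3 := by
  set g : ℝ → ℝ := fun y => y ^ 3 / 3 - (Real.sin y - y * Real.cos y) with hg
  have hd : ∀ y : ℝ, HasDerivAt g (y ^ 2 - y * Real.sin y) y := by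
    intro y
    have h := ((hasDerivAt_pow 3 y).div_const 3).sub
      ((Real.hasDerivAt_sin y).sub ((hasDerivAt_id y).mul (Real.hasDerivAt_cos y)))
    convert h using 1
    · rfl
    · rfl
    · rfl
    simp only [id_eq]
    push_cast
    ring
  have hmono : MonotoneOn g (Icc 0 1) := by
    apply monotoneOn_of_hasDerivWithinAt_nonneg (convex_Icc 0 1)
      (fun y _ => (hd y).continuousAt.continuousWithinAt)
      (fun y _ => (hd y).hasDerivWithinAt)
    rintro y hy
    rw [interior_Icc] at hy
    have : Real.sin y ≤ y := (Real.sin_lt hy.1).le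
    nlinarith [hy.1.le]
  have h0 : g 0 = 0 := by simp [hg]
  have := hmono (left_mem_Icc.2 zero_le_one) ⟨hx, hx1⟩ hx
  rw [h0] at this
  simpa [hg] using this

lemma le_sin_sub_mul_cos (x : ℝ) (hx : 0 ≤ x) (hx1 : x ≤ 1) :
    x ^ 3 / 3 - x ^ 5 / 20 ≤ Real.sin x - x * Real.cos x := by
  set g : ℝ → ℝ := fun y => (Real.sin y - y * Real.cos y) - (y ^ 3 / 3 - y ^ 5 / 20) with hg
  have hd : ∀ y : ℝ, HasDerivAt g (y * Real.sin y - y ^ 2 + y ^ 4 / 4) y := by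
    intro y
    have h := ((Real.hasDerivAt_sin y).sub ((hasDerivAt_id y).mul (Real.hasDerivAt_cos y))).sub
      (((hasDerivAt_pow 3 y).div_const 3).sub ((hasDerivAt_pow 5 y).div_const 20))
    convert h using 1
    · rfl
    · rfl
    · rfl
    simp only [id_eq]
    push_cast
    ring
  have hmono : MonotoneOn g (Icc 0 1) := by
    apply monotoneOn_of_hasDerivWithinAt_nonneg (convex_Icc 0 1)
      (fun y _ => (hd y).continuousAt.continuousWithinAt)
      (fun y _ => (hd y).hasDerivWithinAt)
    rintro y hy
    rw [interior_Icc] at hy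
    have : y - y ^ 3 / 4 < Real.sin y := by nlinarith [Real.sin_gt_sub_cube hy.1, pow_pos hy.1 3]
    nlinarith [hy.1.le]
  have h0 : g 0 = 0 := by simp [hg]
  have := hmono (left_mem_Icc.2 zero_le_one) ⟨hx, hx1⟩ hx
  rw [h0] at this
  simpa [hg] using this

/-- Two-sided bounds for `jₙ` near zero. -/
lemma sbj_bounds : ∀ n : ℕ, ∀ x : ℝ, 0 < x → x ≤ 1 →
    sbjA n * x ^ n * (1 - x ^ 2 / 4) ≤ sbj n x ∧ sbj n x ≤ sbjA n * x ^ n := by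
  have base0 : ∀ x : ℝ, 0 < x → x ≤ 1 →
      sbjA 0 * x ^ 0 * (1 - x ^ 2 / 4) ≤ sbj 0 x ∧ sbj 0 x ≤ sbjA 0 * x ^ 0 := by
    intro x hx hx1
    rw [sbjA_zero, sbj_zero]
    constructor
    · rw [le_div_iff₀ hx]
      nlinarith [Real.sin_gt_sub_cube hx, pow_pos hx 3]
    · rw [pow_zero, mul_one, div_le_one hx]
      exact (Real.sin_lt hx).le
  have base1 : ∀ x : ℝ, 0 < x → x ≤ 1 →
      sbjA 1 * x ^ 1 * (1 - x ^ 2 / 4) ≤ sbj 1 x ∧ sbj 1 x ≤ sbjA 1 * x ^ 1 := by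
    intro x hx hx1
    have e : sbj 1 x = (Real.sin x - x * Real.cos x) / x ^ 2 := by
      rw [sbj_one]; field_simp
    rw [sbjA_one, e]
    constructor
    · rw [le_div_iff₀ (by positivity)]
      nlinarith [le_sin_sub_mul_cos x hx.le hx1, pow_nonneg hx.le 5]
    · rw [div_le_iff₀ (by positivity)]
      nlinarith [sin_sub_mul_cos_le x hx.le hx1]
  suffices h : ∀ n : ℕ, (∀ x : ℝ, 0 < x → x ≤ 1 →
      sbjA n * x ^ n * (1 - x ^ 2 / 4) ≤ sbj n x ∧ sbj n x ≤ sbjA n * x ^ n) ∧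
      (∀ x : ℝ, 0 < x → x ≤ 1 →
      sbjA (n+1) * x ^ (n+1) * (1 - x ^ 2 / 4) ≤ sbj (n+1) x ∧
        sbj (n+1) x ≤ sbjA (n+1) * x ^ (n+1)) by
    exact fun n => (h n).1
  intro n
  induction n with
  | zero => exact ⟨base0, base1⟩
  | succ m ih =>
    refine ⟨ih.2, ?_⟩
    intro x hx hx1
    -- the key limit: x^(m+3) * sbj (m+2) x → 0
    have hmem : Ioc (0:ℝ) 1 ∈ 𝓝[>] (0:ℝ) :=
      Ioc_mem_nhdsGT_of_mem ⟨le_refl 0, zero_lt_one⟩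
    have hbound : ∀ y : ℝ, y ∈ Ioc (0:ℝ) 1 →
        ‖y ^ (m+3) * sbj (m+2) y‖ ≤ (2 * (m:ℝ) + 4) * y := by
      intro y hy
      obtain ⟨hy0, hy1⟩ := hy
      have hyne : y ≠ 0 := ne_of_gt hy0
      have e : y ^ (m+3) * sbj (m+2) y =
          (2 * (m:ℝ) + 3) * (y ^ (m+2) * sbj (m+1) y) - y * (y ^ (m+2) * sbj m y) := by
        rw [sbj_rec m]
        field_simp
        ring
      have hb1 : |sbj (m+1) y| ≤ y ^ (m+1) := by
        obtain ⟨hlo, hhi⟩ := (ih.2) y hy0 hy1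
        rw [abs_le]
        constructor
        · calc -(y^(m+1)) ≤ 0 := neg_nonpos.2 (by positivity)
            _ ≤ sbjA (m+1) * y ^ (m+1) * (1 - y^2/4) := by
                have h1 := sbjA_pos (m+1)
                have h2 : (0:ℝ) ≤ y ^ (m+1) := by positivity
                have h3 : y^2 ≤ 1 := by nlinarith
                nlinarith
            _ ≤ sbj (m+1) y := hlo
        · calc sbj (m+1) y ≤ sbjA (m+1) * y ^ (m+1) := hhi
            _ ≤ 1 * y ^ (m+1) := by
                have := sbjA_le_one (m+1); have : (0:ℝ) ≤ y ^ (m+1) := by positivity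
                nlinarith [sbjA_le_one (m+1)]
            _ = y ^ (m+1) := one_mul _
      have hb0 : |sbj m y| ≤ y ^ m := by
        obtain ⟨hlo, hhi⟩ := (ih.1) y hy0 hy1
        rw [abs_le]
        constructor
        · calc -(y^m) ≤ 0 := neg_nonpos.2 (by positivity)
            _ ≤ sbjA m * y ^ m * (1 - y^2/4) := by
                have h1 := sbjA_pos m
                have h2 : (0:ℝ) ≤ y ^ m := by positivity
                have h3 : y^2 ≤ 1 := by nlinarith
                nlinarith
            _ ≤ sbj m y := hlo
        · calc sbj m y ≤ sbjA m * y ^ m := hhi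
            _ ≤ 1 * y ^ m := by
                have : (0:ℝ) ≤ y ^ m := by positivity
                nlinarith [sbjA_le_one m]
            _ = y ^ m := one_mul _
      rw [e]
      have hp1 : y ^ (m+2) * |sbj (m+1) y| ≤ y ^ (m+2) * y ^ (m+1) := by
        apply mul_le_mul_of_nonneg_left hb1 (by positivity)
      have hp0 : y ^ (m+2) * |sbj m y| ≤ y ^ (m+2) * y ^ m := by
        apply mul_le_mul_of_nonneg_left hb0 (by positivity)
      have hy2 : y ^ (m+2) * y ^ (m+1) ≤ y := by
        rw [← pow_add]
        calc y ^ (m+2+(m+1)) ≤ y ^ 1 := pow_le_pow_of_le_one hy0.le hy1 (by omega)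
          _ = y := pow_one y
      have hy3 : y * (y ^ (m+2) * y ^ m) ≤ y := by
        rw [← pow_add, ← pow_succ']
        calc y ^ (m+2+m+1) ≤ y ^ 1 := pow_le_pow_of_le_one hy0.le hy1 (by omega)
          _ = y := pow_one y
      calc ‖(2 * (m:ℝ) + 3) * (y ^ (m+2) * sbj (m+1) y) - y * (y ^ (m+2) * sbj m y)‖
          ≤ ‖(2 * (m:ℝ) + 3) * (y ^ (m+2) * sbj (m+1) y)‖ + ‖y * (y ^ (m+2) * sbj m y)‖ :=
            norm_sub_le _ _
        _ = (2 * (m:ℝ) + 3) * (y ^ (m+2) * |sbj (m+1) y|) + y * (y ^ (m+2) * |sbj m y|) := by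
            rw [Real.norm_eq_abs, Real.norm_eq_abs, abs_mul, abs_mul, abs_mul, abs_mul]
            rw [abs_of_nonneg (by positivity : (0:ℝ) ≤ 2*(m:ℝ)+3),
              abs_of_nonneg (by positivity : (0:ℝ) ≤ y ^ (m+2)), abs_of_nonneg hy0.le]
        _ ≤ (2 * (m:ℝ) + 3) * y + y := by
            have h1 : (2 * (m:ℝ) + 3) * (y ^ (m+2) * |sbj (m+1) y|) ≤ (2 * (m:ℝ) + 3) * y :=
              mul_le_mul_of_nonneg_left (le_trans hp1 hy2) (by positivity)
            have h2 : y * (y ^ (m+2) * |sbj m y|) ≤ y := le_trans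
              (mul_le_mul_of_nonneg_left hp0 hy0.le) hy3
            linarith
        _ = (2 * (m:ℝ) + 4) * y := by ring
    have hlim : Tendsto (fun y : ℝ => y ^ (m+3) * sbj (m+2) y) (𝓝[>] (0:ℝ)) (𝓝 0) := by
      apply squeeze_zero_norm' (Filter.eventually_iff_exists_mem.2 ⟨_, hmem, hbound⟩)
      have hc : Continuous (fun y : ℝ => (2 * (m:ℝ) + 4) * y) :=
        continuous_const.mul continuous_id
      have : Tendsto (fun y : ℝ => (2 * (m:ℝ) + 4) * y) (𝓝 (0:ℝ)) (𝓝 0) := by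
        simpa using hc.tendsto 0
      exact this.mono_left nhdsWithin_le_nhds
    have hsucc : sbjA (m+2) * ((2*m+5 : ℕ) : ℝ) = sbjA (m+1) := by
      have hd : (2*((m+1 : ℕ):ℝ)+3) ≠ 0 := by positivity
      rw [show (m+2) = (m+1)+1 from rfl, sbjA_succ (m+1), div_mul_eq_mul_div, div_eq_iff hd]
      push_cast
      ring
    have hkey : sbjA (m+1)/(4*(2*(m:ℝ)+7)) ≤ sbjA (m+2)/4 := by
      rw [show (m+2) = (m+1)+1 from rfl, sbjA_succ (m+1)]
      have h1 := sbjA_pos (m+1)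
      rw [div_div]
      rw [div_le_div_iff₀ (by positivity) (by positivity)]
      push_cast
      nlinarith
    have h27 : (sbjA (m+1)/(4*(2*(m:ℝ)+7))) * ((2*m+7 : ℕ) : ℝ) = sbjA (m+1) / 4 := by
      have hc : ((2*m+7 : ℕ) : ℝ) = 2*(m:ℝ)+7 := by push_cast; ring
      rw [hc]
      have hne : (4*(2*(m:ℝ)+7)) ≠ 0 := by positivity
      field_simp
    -- upper bound
    have hupper : sbj (m+2) x ≤ sbjA (m+2) * x ^ (m+2) := by
      set h : ℝ → ℝ := fun y => sbjA (m+2) * y ^ (2*m+5) - y ^ (m+3) * sbj (m+2) y with hh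
      have hd : ∀ y : ℝ, y ≠ 0 → HasDerivAt h
          (sbjA (m+2) * ((2*m+5 : ℕ) * y ^ (2*m+4)) - y ^ (m+3) * sbj (m+1) y) y := by
        intro y hy
        exact ((hasDerivAt_pow (2*m+5) y).const_mul _).sub (hasDerivAt_pow_mul_sbj m y hy)
      have hmono : MonotoneOn h (Ioc 0 1) := by
        apply monotoneOn_of_hasDerivWithinAt_nonneg (convex_Ioc 0 1)
          (fun y hy => (hd y (ne_of_gt hy.1)).continuousAt.continuousWithinAt)
          (fun y hy => by
            rw [interior_Ioc] at hy
            exact (hd y (ne_of_gt hy.1)).hasDerivWithinAt)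
        rintro y hy
        rw [interior_Ioc] at hy
        obtain ⟨hy0, hy1⟩ := hy
        have hhi := ((ih.2) y hy0 hy1.le).2
        have e1 : y ^ (2*m+4) = y ^ (m+3) * y ^ (m+1) := by
          rw [← pow_add]; congr 1; omega
        have hxp : (0:ℝ) < y ^ (m+3) := by positivity
        have hc1 : sbjA (m+2) * ((2*m+5 : ℕ) * y ^ (2*m+4)) =
            (sbjA (m+1) * y ^ (m+1)) * y ^ (m+3) := by
          rw [e1, show sbjA (m+2) * (((2*m+5 : ℕ):ℝ) * (y ^ (m+3) * y ^ (m+1))) =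
            (sbjA (m+2) * ((2*m+5 : ℕ):ℝ)) * y ^ (m+1) * y ^ (m+3) from by ring, hsucc]
        rw [hc1]
        have := mul_le_mul_of_nonneg_right hhi hxp.le
        linarith
      have hx0 : Tendsto h (𝓝[>] (0:ℝ)) (𝓝 0) := by
        have hc : Continuous (fun y : ℝ => sbjA (m+2) * y ^ (2*m+5)) :=
          continuous_const.mul (continuous_pow _)
        have h00 : sbjA (m+2) * (0:ℝ) ^ (2*m+5) = 0 := by
          rw [zero_pow (by omega : 2*m+5 ≠ 0)]; ring
        have hp : Tendsto (fun y : ℝ => sbjA (m+2) * y ^ (2*m+5)) (𝓝[>] (0:ℝ)) (𝓝 0) := by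
          have := (hc.tendsto 0).mono_left (nhdsWithin_le_nhds (s := Ioi (0:ℝ)))
          rwa [h00] at this
        simpa using hp.sub hlim
      have hev : ∀ᶠ y in 𝓝[>] (0:ℝ), h y ≤ h x := by
        filter_upwards [Ioc_mem_nhdsGT_of_mem ⟨le_refl (0:ℝ), hx⟩] with y hy
        exact hmono ⟨hy.1, le_trans hy.2 hx1⟩ ⟨hx, hx1⟩ hy.2
      have h0le : (0:ℝ) ≤ h x := le_of_tendsto hx0 hev
      rw [hh] at h0le
      simp only [sub_nonneg] at h0le
      have hxp : (0:ℝ) < x ^ (m+3) := by positivity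
      have h2 : x^(m+3) * sbj (m+2) x ≤ x^(m+3) * (sbjA (m+2) * x^(m+2)) := by
        calc x^(m+3) * sbj (m+2) x ≤ sbjA (m+2) * x ^ (2*m+5) := h0le
          _ = x^(m+3) * (sbjA (m+2) * x^(m+2)) := by
              rw [show 2*m+5 = (m+2)+(m+3) from by omega, pow_add]; ring
      exact le_of_mul_le_mul_left h2 hxp
    -- lower bound
    have hlower : sbjA (m+2) * x ^ (m+2) * (1 - x ^ 2 / 4) ≤ sbj (m+2) x := by
      set h : ℝ → ℝ := fun y => y ^ (m+3) * sbj (m+2) y -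
          (sbjA (m+2) * y ^ (2*m+5) - (sbjA (m+1)/(4*(2*(m:ℝ)+7))) * y ^ (2*m+7)) with hh
      have hd : ∀ y : ℝ, y ≠ 0 → HasDerivAt h
          (y ^ (m+3) * sbj (m+1) y -
            (sbjA (m+2) * ((2*m+5 : ℕ) * y ^ (2*m+4)) -
              (sbjA (m+1)/(4*(2*(m:ℝ)+7))) * ((2*m+7 : ℕ) * y ^ (2*m+6)))) y := by
        intro y hy
        exact (hasDerivAt_pow_mul_sbj m y hy).sub
          (((hasDerivAt_pow (2*m+5) y).const_mul _).sub ((hasDerivAt_pow (2*m+7) y).const_mul _))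
      have hmono : MonotoneOn h (Ioc 0 1) := by
        apply monotoneOn_of_hasDerivWithinAt_nonneg (convex_Ioc 0 1)
          (fun y hy => (hd y (ne_of_gt hy.1)).continuousAt.continuousWithinAt)
          (fun y hy => by
            rw [interior_Ioc] at hy
            exact (hd y (ne_of_gt hy.1)).hasDerivWithinAt)
        rintro y hy
        rw [interior_Ioc] at hy
        obtain ⟨hy0, hy1⟩ := hy
        have hlo := ((ih.2) y hy0 hy1.le).1
        have hxp : (0:ℝ) < y ^ (m+3) := by positivity
        have hc1 : sbjA (m+2) * ((2*m+5 : ℕ) * y ^ (2*m+4)) =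
            (sbjA (m+1) * y ^ (m+1)) * y ^ (m+3) := by
          rw [show y ^ (2*m+4) = y ^ (m+3) * y ^ (m+1) from by rw [← pow_add]; congr 1; omega,
            show sbjA (m+2) * (((2*m+5 : ℕ):ℝ) * (y ^ (m+3) * y ^ (m+1))) =
            (sbjA (m+2) * ((2*m+5 : ℕ):ℝ)) * y ^ (m+1) * y ^ (m+3) from by ring, hsucc]
        have hc2 : (sbjA (m+1)/(4*(2*(m:ℝ)+7))) * ((2*m+7 : ℕ) * y ^ (2*m+6)) =
            (sbjA (m+1) * y ^ (m+1) * (y^2/4)) * y ^ (m+3) := by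
          rw [show y ^ (2*m+6) = y ^ (m+3) * (y ^ (m+1) * y^2) from by
            rw [← pow_add, ← pow_add]; congr 1; omega,
            show (sbjA (m+1)/(4*(2*(m:ℝ)+7))) * (((2*m+7 : ℕ):ℝ) * (y ^ (m+3) * (y ^ (m+1) * y^2))) =
            ((sbjA (m+1)/(4*(2*(m:ℝ)+7))) * ((2*m+7 : ℕ):ℝ)) * (y ^ (m+1) * y^2) * y ^ (m+3) from by
              ring, h27]
          ring
        rw [hc1, hc2]
        have := mul_le_mul_of_nonneg_right hlo hxp.le
        nlinarith [this]
      have hx0 : Tendsto h (𝓝[>] (0:ℝ)) (𝓝 0) := by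
        have hc : Continuous (fun y : ℝ => sbjA (m+2) * y ^ (2*m+5) -
            (sbjA (m+1)/(4*(2*(m:ℝ)+7))) * y ^ (2*m+7)) :=
          (continuous_const.mul (continuous_pow _)).sub (continuous_const.mul (continuous_pow _))
        have h00 : sbjA (m+2) * (0:ℝ) ^ (2*m+5) -
            (sbjA (m+1)/(4*(2*(m:ℝ)+7))) * (0:ℝ) ^ (2*m+7) = 0 := by
          rw [zero_pow (by omega : 2*m+5 ≠ 0), zero_pow (by omega : 2*m+7 ≠ 0)]; ring
        have hp := (hc.tendsto 0).mono_left (nhdsWithin_le_nhds (s := Ioi (0:ℝ)))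
        rw [h00] at hp
        simpa using hlim.sub hp
      have hev : ∀ᶠ y in 𝓝[>] (0:ℝ), h y ≤ h x := by
        filter_upwards [Ioc_mem_nhdsGT_of_mem ⟨le_refl (0:ℝ), hx⟩] with y hy
        exact hmono ⟨hy.1, le_trans hy.2 hx1⟩ ⟨hx, hx1⟩ hy.2
      have h0le : (0:ℝ) ≤ h x := le_of_tendsto hx0 hev
      rw [hh] at h0le
      simp only [sub_nonneg] at h0le
      have hxp : (0:ℝ) < x ^ (m+3) := by positivity
      have h2 : x^(m+3) * (sbjA (m+2) * x^(m+2) * (1 - x^2/4)) ≤ x^(m+3) * sbj (m+2) x := by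
        have e1 : sbjA (m+2) * x ^ (2*m+5) - (sbjA (m+1)/(4*(2*(m:ℝ)+7))) * x ^ (2*m+7) =
            x^(m+3) * (sbjA (m+2) * x^(m+2) - (sbjA (m+1)/(4*(2*(m:ℝ)+7))) * (x^(m+2) * x^2)) := by
          rw [show 2*m+5 = (m+3)+(m+2) from by omega, show 2*m+7 = (m+3)+(m+2+2) from by omega,
            pow_add, pow_add, pow_add]
          ring
        rw [e1] at h0le
        have hstep : sbjA (m+2) * x^(m+2) * (1 - x^2/4) ≤
            sbjA (m+2) * x^(m+2) - (sbjA (m+1)/(4*(2*(m:ℝ)+7))) * (x^(m+2) * x^2) := by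
          have hq : (0:ℝ) ≤ x^(m+2) * x^2 := by positivity
          nlinarith [mul_le_mul_of_nonneg_right hkey hq]
        calc x^(m+3) * (sbjA (m+2) * x^(m+2) * (1 - x^2/4))
            ≤ x^(m+3) * (sbjA (m+2) * x^(m+2) - (sbjA (m+1)/(4*(2*(m:ℝ)+7))) * (x^(m+2) * x^2)) :=
              mul_le_mul_of_nonneg_left hstep hxp.le
          _ ≤ x^(m+3) * sbj (m+2) x := h0le
      exact le_of_mul_le_mul_left h2 hxp
    exact ⟨hlower, hupper⟩


/-- The energy function `E(x) = x jₙ(x) ((n+1/2) jₙ(x) - x jₙ₊₁(x))`. -/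
noncomputable def sbjE (n : ℕ) (x : ℝ) : ℝ :=
  x * sbj n x * (((n : ℝ) + 1/2) * sbj n x - x * sbj (n+1) x)

lemma hasDerivAt_sbjE (n : ℕ) (x : ℝ) (hx : x ≠ 0) :
    HasDerivAt (sbjE n)
      ((((n : ℝ) + 1/2) * sbj n x - x * sbj (n+1) x) ^ 2 +
        (sbj n x) ^ 2 * (((n : ℝ) + 1/2) ^ 2 - x ^ 2)) x := by
  have hj := hasDerivAt_sbj n x hx
  have hJ := hasDerivAt_sbj (n+1) x hx
  have h1 : HasDerivAt (fun y => y * sbj n y)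
      (1 * sbj n x + x * ((n / x) * sbj n x - sbj (n + 1) x)) x := (hasDerivAt_id x).mul hj
  have h2 : HasDerivAt (fun y => ((n : ℝ) + 1/2) * sbj n y - y * sbj (n+1) y)
      (((n : ℝ) + 1/2) * ((n / x) * sbj n x - sbj (n + 1) x) -
        (1 * sbj (n+1) x + x * ((((n+1 : ℕ)) / x) * sbj (n+1) x - sbj (n + 2) x))) x :=
    (hj.const_mul _).sub ((hasDerivAt_id x).mul hJ)
  have h := h1.mul h2
  convert h using 1
  · rfl
  · rfl
  · rfl
  rw [sbj_rec n]
  push_cast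
  field_simp
  ring

lemma sbjE_mono (n : ℕ) : MonotoneOn (sbjE n) (Ioc 0 ((n : ℝ) + 1/2)) := by
  apply monotoneOn_of_hasDerivWithinAt_nonneg (convex_Ioc _ _)
    (fun y hy => (hasDerivAt_sbjE n y (ne_of_gt hy.1)).continuousAt.continuousWithinAt)
    (fun y hy => by
      rw [interior_Ioc] at hy
      exact (hasDerivAt_sbjE n y (ne_of_gt hy.1)).hasDerivWithinAt)
  rintro y hy
  rw [interior_Ioc] at hy
  obtain ⟨hy0, hy1⟩ := hy
  have h1 : y ^ 2 ≤ ((n : ℝ) + 1/2) ^ 2 := by nlinarith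
  nlinarith [sq_nonneg (((n : ℝ) + 1/2) * sbj n y - y * sbj (n+1) y), sq_nonneg (sbj n y)]

lemma sbj_pos_small (n : ℕ) (x : ℝ) (hx : 0 < x) (hx2 : x ≤ 1/2) : 0 < sbj n x := by
  have hb := (sbj_bounds n x hx (by linarith)).1
  have h1 : (0:ℝ) < sbjA n * x ^ n * (1 - x ^ 2 / 4) := by
    have h5 := sbjA_pos n
    have hxn : (0:ℝ) < x ^ n := by positivity
    have h4 : (0:ℝ) < 1 - x ^ 2 / 4 := by nlinarith
    exact mul_pos (mul_pos h5 hxn) h4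
  linarith

lemma sbjG_pos_small (n : ℕ) (x : ℝ) (hx : 0 < x) (hx2 : x ≤ 1/2) :
    0 < ((n : ℝ) + 1/2) * sbj n x - x * sbj (n+1) x := by
  have hb1 := (sbj_bounds n x hx (by linarith)).1
  have hb2 := (sbj_bounds (n+1) x hx (by linarith)).2
  have hA := sbjA_succ n
  have hApos := sbjA_pos n
  have hxn : (0:ℝ) < x ^ n := by positivity
  have hc : (1/2 : ℝ) ≤ (n : ℝ) + 1/2 := by linarith [Nat.cast_nonneg (α := ℝ) n]
  have hxx : x ^ (n+1) * x = x ^ n * x ^ 2 := by rw [pow_succ]; ring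
  have h2 : x * sbj (n+1) x ≤ sbjA n / (2 * (n : ℝ) + 3) * (x ^ n * x ^ 2) := by
    calc x * sbj (n+1) x ≤ x * (sbjA (n+1) * x ^ (n+1)) :=
          mul_le_mul_of_nonneg_left hb2 hx.le
      _ = sbjA (n+1) * (x ^ (n+1) * x) := by ring
      _ = sbjA n / (2 * (n : ℝ) + 3) * (x ^ n * x ^ 2) := by rw [hA, hxx]
  have h3 : sbjA n / (2 * (n : ℝ) + 3) * (x ^ n * x ^ 2) ≤ sbjA n * x ^ n * (x ^ 2 / 3) := by
    rw [div_mul_eq_mul_div, div_le_iff₀ (by positivity)]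
    have hq : (0:ℝ) ≤ sbjA n * (x ^ n * x ^ 2) := by positivity
    nlinarith [Nat.cast_nonneg (α := ℝ) n]
  have h1 : ((n : ℝ) + 1/2) * (sbjA n * x ^ n * (1 - x ^ 2 / 4)) ≤
      ((n : ℝ) + 1/2) * sbj n x := mul_le_mul_of_nonneg_left hb1 (by positivity)
  have hx4 : x ^ 2 ≤ 1/4 := by nlinarith
  have hfinal : sbjA n * x ^ n * (x ^ 2 / 3) <
      ((n : ℝ) + 1/2) * (sbjA n * x ^ n * (1 - x ^ 2 / 4)) := by
    have key : x ^ 2 / 3 < ((n : ℝ) + 1/2) * (1 - x ^ 2 / 4) := by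
      have h5 : ((n : ℝ) + 1/2) * (1 - x ^ 2 / 4) ≥ (1/2) * (1 - 1/16) := by
        have : (1 - x ^ 2 / 4) ≥ 1 - 1/16 := by nlinarith
        nlinarith [Nat.cast_nonneg (α := ℝ) n]
      nlinarith
    nlinarith [mul_pos (sbjA_pos n) hxn]
  linarith

lemma sbjE_pos (n : ℕ) (x : ℝ) (hx : 0 < x) (hxν : x ≤ (n : ℝ) + 1/2) : 0 < sbjE n x := by
  rcases le_or_gt x (1/2) with h | h
  · exact mul_pos (mul_pos hx (sbj_pos_small n x hx h)) (sbjG_pos_small n x hx h)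
  · have h12 : (1/2 : ℝ) ∈ Ioc (0:ℝ) ((n : ℝ) + 1/2) :=
      ⟨by norm_num, by nlinarith [Nat.cast_nonneg (α := ℝ) n]⟩
    have hmono := sbjE_mono n h12 ⟨hx, hxν⟩ h.le
    have hpos : 0 < sbjE n (1/2) :=
      mul_pos (mul_pos (by norm_num) (sbj_pos_small n (1/2) (by norm_num) le_rfl))
        (sbjG_pos_small n (1/2) (by norm_num) le_rfl)
    linarith

/-- The key positivity facts on `(0, n+1/2]`. -/
lemma sbj_pos_and_G (n : ℕ) (x : ℝ) (hx : 0 < x) (hxν : x ≤ (n : ℝ) + 1/2) :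
    0 < sbj n x ∧ 0 < ((n : ℝ) + 1/2) * sbj n x - x * sbj (n+1) x := by
  have hE := sbjE_pos n x hx hxν
  have hjpos : 0 < sbj n x := by
    rcases le_or_gt x (1/2) with h | h
    · exact sbj_pos_small n x hx h
    · by_contra hle
      push_neg at hle
      have hne : sbj n x ≠ 0 := by
        intro h0
        rw [sbjE, h0] at hE
        norm_num at hE
      have hlt : sbj n x < 0 := lt_of_le_of_ne hle hne
      have hcont : ContinuousOn (sbj n) (Icc (1/2 : ℝ) x) := by
        intro y hy
        have hy0 : (0:ℝ) < y := lt_of_lt_of_le (by norm_num) hy.1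
        exact (hasDerivAt_sbj n y (ne_of_gt hy0)).continuousAt.continuousWithinAt
      have hsub := intermediate_value_Icc' h.le hcont
      have h0mem : (0:ℝ) ∈ Icc (sbj n x) (sbj n (1/2)) :=
        ⟨hlt.le, (sbj_pos_small n (1/2) (by norm_num) le_rfl).le⟩
      obtain ⟨c, hc, hc0⟩ := hsub h0mem
      have hc1 : (0:ℝ) < c := lt_of_lt_of_le (by norm_num) hc.1
      have hc2 : c ≤ (n : ℝ) + 1/2 := le_trans hc.2 hxν
      have := sbjE_pos n c hc1 hc2
      rw [sbjE, hc0] at this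
      norm_num at this
  refine ⟨hjpos, ?_⟩
  have hxj : 0 < x * sbj n x := mul_pos hx hjpos
  by_contra hF
  push_neg at hF
  rw [sbjE] at hE
  nlinarith [hE, hxj]


lemma abs_sbj_le_one (n : ℕ) (x : ℝ) (hx : 0 < x) (hx1 : x ≤ 1) : |sbj n x| ≤ 1 := by
  obtain ⟨hlo, hhi⟩ := sbj_bounds n x hx hx1
  have hA := sbjA_pos n
  have hA1 := sbjA_le_one n
  have hxn : (0:ℝ) < x ^ n := by positivity
  have hxn1 : x ^ n ≤ 1 := pow_le_one₀ hx.le hx1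
  rw [abs_le]
  constructor
  · have h4 : (0:ℝ) < 1 - x ^ 2 / 4 := by nlinarith
    nlinarith
  · nlinarith

/-- below the turning point (`kR ≤ n + 1/2`), the function
`g(ρ) = ρ² jₙ(kρ)²` (with `g(0) = 0`) is convex on `[0, R]`. -/
theorem sbj_sq_convex_below_turning_point
    (n : ℕ) (k R : ℝ) (hk : 0 < k) (hR : 0 < R) (hkR : k * R ≤ (n : ℝ) + 1 / 2) :
    ConvexOn ℝ (Set.Icc (0 : ℝ) R)
      (fun ρ => if ρ = 0 then 0 else ρ ^ 2 * sbj n (k * ρ) ^ 2) := by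
  have hfun : (fun ρ : ℝ => if ρ = 0 then 0 else ρ ^ 2 * sbj n (k * ρ) ^ 2) =
      (fun ρ : ℝ => ρ ^ 2 * sbj n (k * ρ) ^ 2) := by
    funext ρ
    split_ifs with h
    · rw [h]; ring
    · rfl
  rw [hfun]
  set f : ℝ → ℝ := fun ρ => ρ ^ 2 * sbj n (k * ρ) ^ 2 with hf
  set f1 : ℝ → ℝ := fun ρ => 2*((n:ℝ)+1)*ρ * sbj n (k*ρ)^2 -
      2*k*ρ^2 * sbj n (k*ρ) * sbj (n+1) (k*ρ) with hf1
  set f2 : ℝ → ℝ := fun ρ => 2*((n:ℝ)+1)*(2*(n:ℝ)+1) * sbj n (k*ρ)^2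
      - 4*((n:ℝ)+1)*(k*ρ) * sbj n (k*ρ) * sbj (n+1) (k*ρ)
      + 2*(k*ρ)^2 * sbj (n+1) (k*ρ)^2 - 2*(k*ρ)^2 * sbj n (k*ρ)^2 with hf2
  have hinner : ∀ ρ : ℝ, HasDerivAt (fun y : ℝ => k * y) k ρ := by
    intro ρ
    simpa using (hasDerivAt_id ρ).const_mul k
  have hjc : ∀ m : ℕ, ∀ ρ : ℝ, ρ ≠ 0 → HasDerivAt (fun y => sbj m (k * y))
      (((m / (k*ρ)) * sbj m (k*ρ) - sbj (m + 1) (k*ρ)) * k) ρ := by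
    intro m ρ hρ
    exact (hasDerivAt_sbj m (k*ρ) (mul_ne_zero (ne_of_gt hk) hρ)).comp ρ (hinner ρ)
  have hfd : ∀ ρ : ℝ, ρ ≠ 0 → HasDerivAt f (f1 ρ) ρ := by
    intro ρ hρ
    have hkρ : k * ρ ≠ 0 := mul_ne_zero (ne_of_gt hk) hρ
    have h := (hasDerivAt_pow 2 ρ).mul ((hjc n ρ hρ).pow 2)
    convert h using 1
    · rfl
    · rfl
    · rfl
    simp only [Pi.pow_apply]
    rw [hf1]
    push_cast
    field_simp
    ring
  have hf1d : ∀ ρ : ℝ, ρ ≠ 0 → HasDerivAt f1 (f2 ρ) ρ := by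
    intro ρ hρ
    have hkρ : k * ρ ≠ 0 := mul_ne_zero (ne_of_gt hk) hρ
    have h1 : HasDerivAt (fun y : ℝ => 2*((n:ℝ)+1)*y * sbj n (k*y)^2)
        (2*((n:ℝ)+1) * sbj n (k*ρ)^2 + 2*((n:ℝ)+1)*ρ *
          (2 * sbj n (k*ρ) ^ 1 * (((n / (k*ρ)) * sbj n (k*ρ) - sbj (n + 1) (k*ρ)) * k))) ρ := by
      have := (((hasDerivAt_id ρ).const_mul (2*((n:ℝ)+1))).mul ((hjc n ρ hρ).pow 2))
      convert this using 1
      · rfl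
      · rfl
      · rfl
      simp only [id_eq, Pi.pow_apply]
      ring
    have h2 : HasDerivAt (fun y : ℝ => 2*k*y^2 * sbj n (k*y) * sbj (n+1) (k*y))
        ((2*k*(2*ρ) * sbj n (k*ρ) + 2*k*ρ^2 *
            (((n / (k*ρ)) * sbj n (k*ρ) - sbj (n + 1) (k*ρ)) * k)) * sbj (n+1) (k*ρ) +
          2*k*ρ^2 * sbj n (k*ρ) *
            (((((n+1:ℕ)) / (k*ρ)) * sbj (n+1) (k*ρ) - sbj (n + 2) (k*ρ)) * k)) ρ := by
      have hbase : HasDerivAt (fun y : ℝ => 2*k*y^2 * sbj n (k*y))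
          (2*k*(2*ρ) * sbj n (k*ρ) + 2*k*ρ^2 *
            (((n / (k*ρ)) * sbj n (k*ρ) - sbj (n + 1) (k*ρ)) * k)) ρ := by
        have := (((hasDerivAt_pow 2 ρ).const_mul (2*k)).mul (hjc n ρ hρ))
        convert this using 1
        · rfl
        · rfl
        · rfl
        push_cast
        ring
      exact hbase.mul (hjc (n+1) ρ hρ)
    have h := h1.sub h2
    convert h using 1
    · rfl
    · rfl
    · rfl
    rw [hf2, sbj_rec n]
    push_cast
    field_simp
    ring
  have hcont : ContinuousOn f (Icc 0 R) := by
    intro ρ hρ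
    rcases eq_or_lt_of_le hρ.1 with h0 | h0
    · -- ρ = 0
      rw [← h0]
      have hf0 : f 0 = 0 := by rw [hf]; norm_num
      unfold ContinuousWithinAt
      rw [hf0]
      have hev : ∀ᶠ y in 𝓝[Icc (0:ℝ) R] 0, ‖f y‖ ≤ y^2 := by
        have hev1 : ∀ᶠ y in 𝓝[Icc (0:ℝ) R] 0, y ∈ Icc (0:ℝ) R :=
          eventually_mem_nhdsWithin
        have hev2 : ∀ᶠ y in 𝓝[Icc (0:ℝ) R] 0, |y| < 1/k := by
          apply Filter.Eventually.filter_mono nhdsWithin_le_nhds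
          filter_upwards [eventually_abs_sub_lt 0 (by positivity : (0:ℝ) < 1/k)] with y hy
          simpa using hy
        filter_upwards [hev1, hev2] with y hy1 hy2
        rcases eq_or_lt_of_le hy1.1 with hy0 | hy0
        · rw [← hy0, hf]
          norm_num
        · have hky : 0 < k * y := mul_pos hk hy0
          have hky1 : k * y ≤ 1 := by
            rw [abs_of_nonneg hy1.1] at hy2
            rw [← mul_le_mul_iff_of_pos_left (show (0:ℝ) < 1/k by positivity)]
            calc 1/k * (k*y) = y := by field_simp
              _ ≤ 1/k * 1 := by rw [mul_one]; exact hy2.le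
          have habs := abs_sbj_le_one n (k*y) hky hky1
          rw [hf]
          simp only [Real.norm_eq_abs]
          rw [abs_mul, abs_pow, abs_of_nonneg hy1.1]
          have h1 : |sbj n (k*y) ^ 2| ≤ 1 := by
            rw [abs_pow]
            calc |sbj n (k*y)|^2 ≤ 1^2 := by
                  apply pow_le_pow_left₀ (abs_nonneg _) habs
              _ = 1 := one_pow 2
          nlinarith [pow_nonneg hy1.1 2, abs_nonneg (sbj n (k*y) ^ 2)]
      have htend : Tendsto (fun ρ : ℝ => ρ^2) (𝓝[Icc (0:ℝ) R] 0) (𝓝 0) := by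
        have : Continuous (fun ρ : ℝ => ρ^2) := continuous_pow 2
        have h := (this.tendsto 0).mono_left (nhdsWithin_le_nhds (s := Icc (0:ℝ) R))
        simpa using h
      exact squeeze_zero_norm' hev htend
    · exact (hfd ρ (ne_of_gt h0)).continuousAt.continuousWithinAt
  apply convexOn_of_hasDerivWithinAt2_nonneg (convex_Icc 0 R) hcont
    (f' := f1) (f'' := f2)
  · intro ρ hρ
    rw [interior_Icc] at hρ
    exact (hfd ρ (ne_of_gt hρ.1)).hasDerivWithinAt
  · intro ρ hρ
    rw [interior_Icc] at hρ
    exact (hf1d ρ (ne_of_gt hρ.1)).hasDerivWithinAt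
  · intro ρ hρ
    rw [interior_Icc] at hρ
    obtain ⟨hρ0, hρR⟩ := hρ
    simp only [hf2]
    set x := k * ρ with hx
    have hx0 : 0 < x := mul_pos hk hρ0
    have hxν : x ≤ (n : ℝ) + 1/2 := by
      have : k * ρ ≤ k * R := mul_le_mul_of_nonneg_left hρR.le hk.le
      linarith
    obtain ⟨hj, hG⟩ := sbj_pos_and_G n x hx0 hxν
    set j := sbj n x
    set J := sbj (n+1) x
    have hν : (0:ℝ) < (n:ℝ) + 1/2 := by positivity
    have hterm : 0 ≤ (((n:ℝ)+1/2) - x) * (((n:ℝ)+1/2) + x) * j^2 := by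
      apply mul_nonneg (mul_nonneg (by linarith) (by linarith))
      exact sq_nonneg j
    nlinarith [sq_nonneg (((n:ℝ)+1/2)*j - x*J), mul_pos hG hj, hterm]


end
end
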